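/- Let σ > 0 and λ > 0, and write F_C(x) = F_C(x; 0, λ), f_C(x) = f_C(x; 0, λ), F_G(x) = F_G(x; 0, σ), f_G(x) = f_G(x; 0, σ). Suppose there exists x₃ > 0 such that F_G(x₃) = F_C(x₃), F_G(x) < F_C(x) for all x ∈ (0, x₃), and F_G(x) > F_C(x) for all x > x₃. Then there exist x₁ ∈ (0, x₃) and x₂ ∈ (x₃, ∞) such that f_C(x₁) = f_G(x₂) and F_C(x₁) + f_C(x₁)·(x₂ − x₁) = F_G(x₂); that is, a common tangential line linking the Cauchy CDF at x₁ to the Gaussian CDF at x₂ exists. -/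

import Mathlib

/-- Gaussian PDF with location `μ` and scale `σ`. -/
noncomputable def gaussPDF (μ σ x : ℝ) : ℝ :=
  (1 / (σ * Real.sqrt (2 * Real.pi))) * Real.exp (-(x - μ) ^ 2 / (2 * σ ^ 2))

/-- Gaussian CDF with location `μ` and scale `σ`. -/
noncomputable def gaussCDF (μ σ x : ℝ) : ℝ :=
  ∫ t in Set.Iic x, gaussPDF μ σ t

/-- Cauchy PDF with location `m` and scale `lam`. -/
noncomputable def cauchyPDF (m lam x : ℝ) : ℝ :=
  1 / (lam * Real.pi * (1 + ((x - m) / lam) ^ 2))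

/-- Cauchy CDF with location `m` and scale `lam`. -/
noncomputable def cauchyCDF (m lam x : ℝ) : ℝ :=
  1 / 2 + (1 / Real.pi) * Real.arctan ((x - m) / lam)

/-!
The difference `F_G - F_C` vanishes at `0` and at `x₃`, so by Rolle `f_G = f_C` at some
`ξ ∈ (0, x₃)`. The ratio `f_G / f_C` is a positive multiple of `w x = f_G x * (λ² + x²)`,
which increases while `x² + λ² < 2σ²` and decreases afterwards. Since `w ξ = λ / π`,
`f_G x₃ ≤ f_C x₃` would give `f_G < f_C` on `(x₃, ∞)`, so `F_G - F_C` would decrease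
after `x₃`; hence `f_C x₃ < f_G x₃`.

Both CDFs are concave on `[0, ∞)`. Let `x₂` run over `[x₃, b]`, where `f_G b = f_C x₃`,
and let `x₁ ∈ (0, x₃]` be the point with `f_C x₁ = f_G x₂`. By concavity, the Cauchy
tangent at `x₁` passes above `F_G x₂` for `x₂ = x₃` and below it for `x₂ = b`, so the two
tangents coincide for some `x₂` in between.
-/

open Set Real MeasureTheory

section CommonTangent

variable {F G f g : ℝ → ℝ} {u v : ℝ}

theorem sub_lt_mul_sub_of_strictAntiOn (hF : ∀ x, HasDerivAt F (f x) x)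
    (hf : StrictAntiOn f (Icc u v)) (huv : u < v) : F v - F u < f u * (v - u) := by
  obtain ⟨ξ, hξ, hslope⟩ := exists_hasDerivAt_eq_slope F f huv
    (fun x _ ↦ (hF x).continuousAt.continuousWithinAt) fun x _ ↦ hF x
  have hlt : f ξ < f u := hf ⟨le_rfl, huv.le⟩ (Ioo_subset_Icc_self hξ) hξ.1
  rw [eq_div_iff (sub_pos.2 huv).ne'] at hslope
  nlinarith [sub_pos.2 huv]

theorem mul_sub_lt_sub_of_strictAntiOn (hF : ∀ x, HasDerivAt F (f x) x)
    (hf : StrictAntiOn f (Icc u v)) (huv : u < v) : f v * (v - u) < F v - F u := by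
  obtain ⟨ξ, hξ, hslope⟩ := exists_hasDerivAt_eq_slope F f huv
    (fun x _ ↦ (hF x).continuousAt.continuousWithinAt) fun x _ ↦ hF x
  have hlt : f v < f ξ := hf (Ioo_subset_Icc_self hξ) ⟨huv.le, le_rfl⟩ hξ.2
  rw [eq_div_iff (sub_pos.2 huv).ne'] at hslope
  nlinarith [sub_pos.2 huv]

theorem exists_common_tangent {p : ℝ → ℝ} {a b : ℝ} (hab : a < b)
    (hF : ∀ x, HasDerivAt F (f x) x) (hG : ∀ x, HasDerivAt G (g x) x)
    (hp : ContinuousOn p (Icc a b)) (hg : ContinuousOn g (Icc a b))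
    (hfp : ∀ x ∈ Icc a b, f (p x) = g x) (hpa : p a < a) (hpb : p b = a) (hFG : F a = G a)
    (hf_anti : StrictAntiOn f (Icc (p a) a)) (hg_anti : StrictAntiOn g (Icc a b)) :
    ∃ x ∈ Ioo a b, F (p x) + f (p x) * (x - p x) = G x := by
  have hFc : Continuous F := continuous_iff_continuousAt.2 fun x ↦ (hF x).continuousAt
  have hGc : Continuous G := continuous_iff_continuousAt.2 fun x ↦ (hG x).continuousAt
  set Ψ : ℝ → ℝ := fun x ↦ F (p x) + g x * (x - p x) - G x
  have hΨ : ContinuousOn Ψ (Icc a b) :=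
    ((hFc.comp_continuousOn hp).add (hg.mul (continuousOn_id.sub hp))).sub hGc.continuousOn
  have hΨb : Ψ b < 0 := by
    have := mul_sub_lt_sub_of_strictAntiOn hG hg_anti hab
    simp only [Ψ, hpb]
    linarith
  have hΨa : 0 < Ψ a := by
    have := sub_lt_mul_sub_of_strictAntiOn hF hf_anti hpa
    simp only [Ψ, ← hfp a (left_mem_Icc.2 hab.le)]
    linarith
  obtain ⟨x, hx, hΨx⟩ := intermediate_value_Ioo' hab.le hΨ ⟨hΨb, hΨa⟩
  refine ⟨x, hx, ?_⟩
  rw [hfp x (Ioo_subset_Icc_self hx)]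
  linarith [show Ψ x = 0 from hΨx]

end CommonTangent

section Cauchy

variable {lam : ℝ}

theorem cauchyPDF_zero_eq_div (hlam : 0 < lam) (x : ℝ) :
    cauchyPDF 0 lam x = lam / (π * (lam ^ 2 + x ^ 2)) := by
  unfold cauchyPDF
  have := pi_pos
  rw [sub_zero]
  field_simp

theorem cauchyPDF_pos (hlam : 0 < lam) (m x : ℝ) : 0 < cauchyPDF m lam x := by
  unfold cauchyPDF
  have := pi_pos
  positivity

theorem hasDerivAt_cauchyCDF (hlam : 0 < lam) (m x : ℝ) :
    HasDerivAt (cauchyCDF m lam) (cauchyPDF m lam x) x := by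
  have h := ((((hasDerivAt_id' x).sub_const m).div_const lam).arctan.const_mul (1 / π)).const_add
    (1 / 2 : ℝ)
  refine h.congr_deriv ?_
  have := pi_pos
  unfold cauchyPDF
  field_simp

theorem cauchyCDF_self (m lam : ℝ) : cauchyCDF m lam m = 1 / 2 := by
  simp [cauchyCDF]

theorem cauchyPDF_strictAntiOn (hlam : 0 < lam) (m : ℝ) :
    StrictAntiOn (cauchyPDF m lam) (Ici m) := by
  intro x hx y _ hxy
  have := pi_pos
  have hsq : ((x - m) / lam) ^ 2 < ((y - m) / lam) ^ 2 := by
    gcongr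
    exact div_nonneg (sub_nonneg.2 (mem_Ici.1 hx)) hlam.le
  unfold cauchyPDF
  gcongr

noncomputable def cauchyPDFInv (lam s : ℝ) : ℝ :=
  √(lam / (π * s) - lam ^ 2)

theorem continuousOn_cauchyPDFInv (lam : ℝ) : ContinuousOn (cauchyPDFInv lam) (Ioi 0) := by
  unfold cauchyPDFInv
  refine (continuousOn_const.div (continuousOn_const.mul continuousOn_id) ?_).sub
    continuousOn_const |>.sqrt
  intro s hs
  exact mul_ne_zero pi_pos.ne' (ne_of_gt hs)

theorem cauchyPDFInv_pos (hlam : 0 < lam) {s : ℝ} (hs : 0 < s) (hs' : s < cauchyPDF 0 lam 0) :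
    0 < cauchyPDFInv lam s := by
  have := pi_pos
  rw [cauchyPDF_zero_eq_div hlam, lt_div_iff₀ (by positivity)] at hs'
  refine sqrt_pos.2 (sub_pos.2 ?_)
  rw [lt_div_iff₀ (by positivity)]
  nlinarith

theorem cauchyPDF_cauchyPDFInv (hlam : 0 < lam) {s : ℝ} (hs : 0 < s)
    (hs' : s < cauchyPDF 0 lam 0) : cauchyPDF 0 lam (cauchyPDFInv lam s) = s := by
  have := pi_pos
  have hinv := cauchyPDFInv_pos hlam hs hs'
  rw [cauchyPDF_zero_eq_div hlam, cauchyPDFInv, sq_sqrt (sqrt_pos.1 hinv).le]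
  field_simp
  ring

theorem cauchyPDFInv_cauchyPDF (hlam : 0 < lam) {x : ℝ} (hx : 0 ≤ x) :
    cauchyPDFInv lam (cauchyPDF 0 lam x) = x := by
  have := pi_pos
  have hsq : lam / (π * (lam / (π * (lam ^ 2 + x ^ 2)))) - lam ^ 2 = x ^ 2 := by
    field_simp
    ring
  rw [cauchyPDFInv, cauchyPDF_zero_eq_div hlam, hsq, sqrt_sq hx]

theorem cauchyPDFInv_lt (hlam : 0 < lam) {x s : ℝ} (hx : 0 ≤ x) (hxs : cauchyPDF 0 lam x < s)
    (hs : s < cauchyPDF 0 lam 0) : cauchyPDFInv lam s < x := by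
  have hs₀ := (cauchyPDF_pos hlam 0 x).trans hxs
  by_contra! hle
  have := (cauchyPDF_strictAntiOn hlam 0).antitoneOn hx (cauchyPDFInv_pos hlam hs₀ hs).le hle
  rw [cauchyPDF_cauchyPDFInv hlam hs₀ hs] at this
  exact this.not_gt hxs

theorem cauchyPDF_mul_sq_add (hlam : 0 < lam) (x : ℝ) :
    cauchyPDF 0 lam x * (lam ^ 2 + x ^ 2) = lam / π := by
  have := pi_pos
  rw [cauchyPDF_zero_eq_div hlam]
  field_simp

end Cauchy

section Gauss

variable {σ : ℝ}

theorem gaussPDF_eq_gaussianPDFReal (hσ : 0 < σ) (μ : ℝ) :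
    gaussPDF μ σ = ProbabilityTheory.gaussianPDFReal μ (σ ^ 2).toNNReal := by
  ext x
  have := pi_pos
  rw [gaussPDF, ProbabilityTheory.gaussianPDFReal_def, Real.coe_toNNReal _ (sq_nonneg σ),
    show 2 * π * σ ^ 2 = σ ^ 2 * (2 * π) by ring, sqrt_mul (sq_nonneg σ), sqrt_sq hσ.le,
    one_div]

theorem gaussPDF_pos (hσ : 0 < σ) (μ x : ℝ) : 0 < gaussPDF μ σ x := by
  unfold gaussPDF
  have := pi_pos
  positivity

theorem continuous_gaussPDF (μ σ : ℝ) : Continuous (gaussPDF μ σ) := by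
  unfold gaussPDF
  fun_prop

theorem integrable_gaussPDF (hσ : 0 < σ) (μ : ℝ) : Integrable (gaussPDF μ σ) := by
  rw [gaussPDF_eq_gaussianPDFReal hσ]
  exact ProbabilityTheory.integrable_gaussianPDFReal _ _

theorem hasDerivAt_gaussCDF (hσ : 0 < σ) (μ x : ℝ) :
    HasDerivAt (gaussCDF μ σ) (gaussPDF μ σ x) x := by
  have hint := integrable_gaussPDF hσ μ
  have hsplit :
      gaussCDF μ σ = fun y ↦ gaussCDF μ σ 0 + ∫ t in (0 : ℝ)..y, gaussPDF μ σ t := by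
    ext y
    rw [← intervalIntegral.integral_Iic_sub_Iic hint.integrableOn hint.integrableOn]
    unfold gaussCDF
    ring
  rw [hsplit]
  exact (intervalIntegral.integral_hasDerivAt_right hint.intervalIntegrable
    ((continuous_gaussPDF μ σ).stronglyMeasurableAtFilter _ _)
    (continuous_gaussPDF μ σ).continuousAt).const_add _

theorem gaussCDF_zero (hσ : 0 < σ) : gaussCDF 0 σ 0 = 1 / 2 := by
  have hint := integrable_gaussPDF hσ 0
  have htotal : ∫ x, gaussPDF 0 σ x = 1 := by
    rw [gaussPDF_eq_gaussianPDFReal hσ]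
    exact ProbabilityTheory.integral_gaussianPDFReal_eq_one 0 (by simp [hσ.ne'])
  have hsymm : ∫ x in Iic 0, gaussPDF 0 σ x = ∫ x in Ioi 0, gaussPDF 0 σ x := by
    rw [← neg_zero, ← integral_comp_neg_Iic, neg_zero]
    simp [gaussPDF]
  have hsplit :=
    intervalIntegral.integral_Iic_add_Ioi hint.integrableOn hint.integrableOn (b := 0)
  unfold gaussCDF
  linarith

theorem hasDerivAt_gaussPDF (hσ : 0 < σ) (μ x : ℝ) :
    HasDerivAt (gaussPDF μ σ) (-((x - μ) / σ ^ 2) * gaussPDF μ σ x) x := by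
  have h := ((((hasDerivAt_id' x).sub_const μ).fun_pow 2).fun_neg.div_const (2 * σ ^ 2)).exp
    |>.const_mul (1 / (σ * √(2 * π)))
  refine h.congr_deriv ?_
  unfold gaussPDF
  norm_num
  field_simp

theorem gaussPDF_strictAntiOn (hσ : 0 < σ) (μ : ℝ) :
    StrictAntiOn (gaussPDF μ σ) (Ici μ) := by
  refine strictAntiOn_of_deriv_neg (convex_Ici μ) (continuous_gaussPDF μ σ).continuousOn ?_
  intro x hx
  rw [interior_Ici, mem_Ioi] at hx
  rw [(hasDerivAt_gaussPDF hσ μ x).deriv, neg_mul]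
  have := gaussPDF_pos hσ μ x
  have := sub_pos.2 hx
  exact neg_neg_of_pos (by positivity)

theorem exists_gaussPDF_eq (hσ : 0 < σ) {s : ℝ} (hs : 0 < s) (hs' : s < gaussPDF 0 σ 0) :
    ∃ x > 0, gaussPDF 0 σ x = s := by
  have := pi_pos
  set k := σ * √(2 * π) with hk_def
  have hk : 0 < k := by positivity
  have hsk : 0 < s * k := mul_pos hs hk
  have hlog : log (s * k) < 0 := by
    refine log_neg hsk ?_
    rw [gaussPDF, sub_zero, zero_pow two_ne_zero, neg_zero, zero_div, exp_zero, mul_one,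
      lt_one_div hs hk] at hs'
    rwa [← lt_div_iff₀' hs]
  have hsq : 0 < -(2 * σ ^ 2) * log (s * k) := mul_pos_of_neg_of_neg (by nlinarith) hlog
  refine ⟨√(-(2 * σ ^ 2) * log (s * k)), sqrt_pos.2 hsq, ?_⟩
  have hexp : -(-(2 * σ ^ 2) * log (s * k)) / (2 * σ ^ 2) = log (s * k) := by field_simp
  rw [gaussPDF, sub_zero, sq_sqrt hsq.le, hexp, exp_log hsk, ← hk_def]
  field_simp

theorem exists_gt_gaussPDF_eq (hσ : 0 < σ) {a s : ℝ} (ha : 0 ≤ a) (hs : 0 < s)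
    (hsa : s < gaussPDF 0 σ a) : ∃ b > a, gaussPDF 0 σ b = s := by
  have hg := gaussPDF_strictAntiOn hσ 0
  obtain ⟨b, hb₀, hb⟩ :=
    exists_gaussPDF_eq hσ hs (hsa.trans_le (hg.antitoneOn self_mem_Ici ha ha))
  exact ⟨b, (hg.lt_iff_gt hb₀.le ha).1 (hb ▸ hsa), hb⟩

end Gauss

section Comparison

variable {σ lam : ℝ}

theorem hasDerivAt_gaussPDF_mul_sq_add (hσ : 0 < σ) (lam x : ℝ) :
    HasDerivAt (fun y ↦ gaussPDF 0 σ y * (lam ^ 2 + y ^ 2))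
      (gaussPDF 0 σ x * x * (2 * σ ^ 2 - lam ^ 2 - x ^ 2) / σ ^ 2) x := by
  have h := (hasDerivAt_gaussPDF hσ 0 x).mul ((hasDerivAt_pow 2 x).const_add (lam ^ 2))
  refine h.congr_deriv ?_
  field_simp
  ring

theorem strictMonoOn_gaussPDF_mul_sq_add (hσ : 0 < σ) {a : ℝ}
    (ha : a ^ 2 + lam ^ 2 ≤ 2 * σ ^ 2) :
    StrictMonoOn (fun y ↦ gaussPDF 0 σ y * (lam ^ 2 + y ^ 2)) (Icc 0 a) := by
  refine strictMonoOn_of_deriv_pos (convex_Icc 0 a)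
    (fun x _ ↦ (hasDerivAt_gaussPDF_mul_sq_add hσ lam x).continuousAt.continuousWithinAt) ?_
  intro x hx
  rw [interior_Icc] at hx
  rw [(hasDerivAt_gaussPDF_mul_sq_add hσ lam x).deriv]
  have := gaussPDF_pos hσ 0 x
  have : 0 < 2 * σ ^ 2 - lam ^ 2 - x ^ 2 := by nlinarith [hx.1, hx.2]
  have := hx.1
  positivity

theorem strictAntiOn_gaussPDF_mul_sq_add (hσ : 0 < σ) {a : ℝ} (ha₀ : 0 ≤ a)
    (ha : 2 * σ ^ 2 ≤ a ^ 2 + lam ^ 2) :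
    StrictAntiOn (fun y ↦ gaussPDF 0 σ y * (lam ^ 2 + y ^ 2)) (Ici a) := by
  refine strictAntiOn_of_deriv_neg (convex_Ici a)
    (fun x _ ↦ (hasDerivAt_gaussPDF_mul_sq_add hσ lam x).continuousAt.continuousWithinAt) ?_
  intro x hx
  rw [interior_Ici, mem_Ioi] at hx
  rw [(hasDerivAt_gaussPDF_mul_sq_add hσ lam x).deriv]
  have := gaussPDF_pos hσ 0 x
  have hx₀ : 0 < x := ha₀.trans_lt hx
  have hneg : 2 * σ ^ 2 - lam ^ 2 - x ^ 2 < 0 := by nlinarith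
  exact div_neg_of_neg_of_pos (mul_neg_of_pos_of_neg (by positivity) hneg) (by positivity)

theorem gaussPDF_lt_cauchyPDF_of_eq_of_le (hσ : 0 < σ) (hlam : 0 < lam) {ξ a x : ℝ}
    (hξ : 0 ≤ ξ) (hξa : ξ < a) (hξeq : gaussPDF 0 σ ξ = cauchyPDF 0 lam ξ)
    (ha : gaussPDF 0 σ a ≤ cauchyPDF 0 lam a) (hx : a < x) :
    gaussPDF 0 σ x < cauchyPDF 0 lam x := by
  set w := fun y ↦ gaussPDF 0 σ y * (lam ^ 2 + y ^ 2)
  have hpos : ∀ y, 0 < lam ^ 2 + y ^ 2 := fun y ↦ by positivity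
  have hwξ : w ξ = lam / π := by simp only [w, hξeq, cauchyPDF_mul_sq_add hlam]
  have hwa : w a ≤ lam / π :=
    cauchyPDF_mul_sq_add hlam a ▸ mul_le_mul_of_nonneg_right ha (hpos a).le
  suffices hwx : w x < lam / π by
    rw [← cauchyPDF_mul_sq_add hlam x] at hwx
    exact lt_of_mul_lt_mul_right hwx (hpos x).le
  rcases le_or_gt (2 * σ ^ 2) (a ^ 2 + lam ^ 2) with hturn | hturn
  · exact (strictAntiOn_gaussPDF_mul_sq_add hσ (hξ.trans hξa.le) hturn
      self_mem_Ici hx.le hx).trans_le hwa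
  · have := strictMonoOn_gaussPDF_mul_sq_add hσ hturn.le ⟨hξ, hξa.le⟩
      ⟨hξ.trans hξa.le, le_rfl⟩ hξa
    linarith

theorem gaussPDF_lt_cauchyPDF_zero_of_eq (hσ : 0 < σ) (hlam : 0 < lam) {ξ x : ℝ}
    (hξ : 0 < ξ) (hξeq : gaussPDF 0 σ ξ = cauchyPDF 0 lam ξ) (hx : ξ ≤ x) :
    gaussPDF 0 σ x < cauchyPDF 0 lam 0 := calc
  gaussPDF 0 σ x ≤ gaussPDF 0 σ ξ :=
    (gaussPDF_strictAntiOn hσ 0).antitoneOn hξ.le (hξ.le.trans hx) hx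
  _ = cauchyPDF 0 lam ξ := hξeq
  _ < cauchyPDF 0 lam 0 := cauchyPDF_strictAntiOn hlam 0 self_mem_Ici hξ.le hξ

theorem hasDerivAt_gaussCDF_sub_cauchyCDF (hσ : 0 < σ) (hlam : 0 < lam) (x : ℝ) :
    HasDerivAt (fun y ↦ gaussCDF 0 σ y - cauchyCDF 0 lam y)
      (gaussPDF 0 σ x - cauchyPDF 0 lam x) x :=
  (hasDerivAt_gaussCDF hσ 0 x).sub (hasDerivAt_cauchyCDF hlam 0 x)

theorem exists_gaussPDF_eq_cauchyPDF (hσ : 0 < σ) (hlam : 0 < lam) {x₃ : ℝ} (hx₃ : 0 < x₃)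
    (heq : gaussCDF 0 σ x₃ = cauchyCDF 0 lam x₃) :
    ∃ ξ ∈ Ioo 0 x₃, gaussPDF 0 σ ξ = cauchyPDF 0 lam ξ := by
  have hD := hasDerivAt_gaussCDF_sub_cauchyCDF hσ hlam
  obtain ⟨ξ, hξ, hξeq⟩ := exists_hasDerivAt_eq_zero hx₃
    (fun x _ ↦ (hD x).continuousAt.continuousWithinAt)
    (by rw [gaussCDF_zero hσ, cauchyCDF_self, heq, sub_self, sub_self]) fun x _ ↦ hD x
  exact ⟨ξ, hξ, sub_eq_zero.1 hξeq⟩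

theorem cauchyPDF_lt_gaussPDF (hσ : 0 < σ) (hlam : 0 < lam) {ξ x₃ : ℝ}
    (hξ : ξ ∈ Ioo 0 x₃) (hξeq : gaussPDF 0 σ ξ = cauchyPDF 0 lam ξ)
    (heq : gaussCDF 0 σ x₃ = cauchyCDF 0 lam x₃)
    (habove : ∀ x > x₃, cauchyCDF 0 lam x < gaussCDF 0 σ x) :
    cauchyPDF 0 lam x₃ < gaussPDF 0 σ x₃ := by
  by_contra! hle
  have hD := hasDerivAt_gaussCDF_sub_cauchyCDF hσ hlam
  obtain ⟨ζ, hζ, hslope⟩ := exists_hasDerivAt_eq_slope _ _ (lt_add_one x₃)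
    (fun x _ ↦ (hD x).continuousAt.continuousWithinAt) fun x _ ↦ hD x
  have hζneg := gaussPDF_lt_cauchyPDF_of_eq_of_le hσ hlam hξ.1.le hξ.2 hξeq hle hζ.1
  have := habove (x₃ + 1) (lt_add_one x₃)
  rw [heq, add_sub_cancel_left, div_one] at hslope
  linarith

end Comparison

theorem tangential_link_exists_general (σ lam : ℝ) (hσ : 0 < σ) (hlam : 0 < lam)
    (x₃ : ℝ) (hx₃ : 0 < x₃)
    (heq : gaussCDF 0 σ x₃ = cauchyCDF 0 lam x₃)
    (habove : ∀ x > x₃, cauchyCDF 0 lam x < gaussCDF 0 σ x) :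
    ∃ x₁ ∈ Set.Ioo 0 x₃, ∃ x₂ ∈ Set.Ioi x₃,
      cauchyPDF 0 lam x₁ = gaussPDF 0 σ x₂ ∧
      cauchyCDF 0 lam x₁ + cauchyPDF 0 lam x₁ * (x₂ - x₁) = gaussCDF 0 σ x₂ := by
  obtain ⟨ξ, hξ, hξeq⟩ := exists_gaussPDF_eq_cauchyPDF hσ hlam hx₃ heq
  have hcg := cauchyPDF_lt_gaussPDF hσ hlam hξ hξeq heq habove
  have hg := gaussPDF_strictAntiOn hσ 0
  have hg_lt : ∀ x ≥ x₃, gaussPDF 0 σ x < cauchyPDF 0 lam 0 := fun x hx ↦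
    gaussPDF_lt_cauchyPDF_zero_of_eq hσ hlam hξ.1 hξeq (hξ.2.le.trans hx)
  obtain ⟨b, hx₃b, hb⟩ := exists_gt_gaussPDF_eq hσ hx₃.le (cauchyPDF_pos hlam 0 x₃) hcg
  set p := cauchyPDFInv lam ∘ gaussPDF 0 σ
  have hp : ∀ x ≥ x₃, cauchyPDF 0 lam (p x) = gaussPDF 0 σ x := fun x hx ↦
    cauchyPDF_cauchyPDFInv hlam (gaussPDF_pos hσ 0 x) (hg_lt x hx)
  have hp_pos : ∀ x ≥ x₃, 0 < p x := fun x hx ↦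
    cauchyPDFInv_pos hlam (gaussPDF_pos hσ 0 x) (hg_lt x hx)
  have hp_lt : ∀ x ∈ Ico x₃ b, p x < x₃ := fun x hx ↦ cauchyPDFInv_lt hlam hx₃.le
    (hb ▸ hg (hx₃.le.trans hx.1) (hx₃.trans hx₃b).le hx.2) (hg_lt x hx.1)
  obtain ⟨x₂, hx₂, htangent⟩ := exists_common_tangent hx₃b (hasDerivAt_cauchyCDF hlam 0)
    (hasDerivAt_gaussCDF hσ 0)
    ((continuousOn_cauchyPDFInv lam).comp (continuous_gaussPDF 0 σ).continuousOn
      fun x _ ↦ gaussPDF_pos hσ 0 x)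
    (continuous_gaussPDF 0 σ).continuousOn (fun x hx ↦ hp x hx.1)
    (hp_lt x₃ ⟨le_rfl, hx₃b⟩)
    (by rw [Function.comp_apply, hb, cauchyPDFInv_cauchyPDF hlam hx₃.le])
    heq.symm
    ((cauchyPDF_strictAntiOn hlam 0).mono fun x hx ↦ (hp_pos x₃ le_rfl).le.trans hx.1)
    (hg.mono fun x hx ↦ hx₃.le.trans hx.1)
  exact ⟨p x₂, ⟨hp_pos x₂ hx₂.1.le, hp_lt x₂ (Ioo_subset_Ico_self hx₂)⟩,
    x₂, hx₂.1, hp x₂ hx₂.1.le, htangent⟩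

/-- If the zero-centered Gaussian CDF crosses the zero-centered Cauchy CDF exactly
once on `(0, ∞)` at `x₃` (below before, above after), then a common tangential line
exists, tangent to the Cauchy CDF at some `x₁ ∈ (0, x₃)` and to the Gaussian CDF at
some `x₂ ∈ (x₃, ∞)`. -/
theorem tangential_link_exists (σ lam : ℝ) (hσ : 0 < σ) (hlam : 0 < lam)
    (x₃ : ℝ) (hx₃ : 0 < x₃)
    (heq : gaussCDF 0 σ x₃ = cauchyCDF 0 lam x₃)
    (hbelow : ∀ x ∈ Set.Ioo 0 x₃, gaussCDF 0 σ x < cauchyCDF 0 lam x)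
    (habove : ∀ x > x₃, cauchyCDF 0 lam x < gaussCDF 0 σ x) :
    ∃ x₁ ∈ Set.Ioo 0 x₃, ∃ x₂ ∈ Set.Ioi x₃,
      cauchyPDF 0 lam x₁ = gaussPDF 0 σ x₂ ∧
      cauchyCDF 0 lam x₁ + cauchyPDF 0 lam x₁ * (x₂ - x₁) = gaussCDF 0 σ x₂ :=
  tangential_link_exists_general σ lam hσ hlam x₃ hx₃ heq habove
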